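/- The Parshin symbol of monomials is skew-symmetric: fix n ≥ 1, c₁, …, c_{n+1} ∈ ℂ* and k₁, …, k_{n+1} ∈ ℤ^n; then for every permutation σ of {1, …, n+1}, [c_{σ(1)} z^{k_{σ(1)}}, …, c_{σ(n+1)} z^{k_{σ(n+1)}}] = [c₁ z^{k₁}, …, c_{n+1} z^{k_{n+1}}]^{sgn(σ)}, where sgn(σ) ∈ {+1, −1} is the sign of σ. In particular, transposing two arguments replaces the symbol by its inverse. -/
import Mathlib

/-- For `i < j` in `{0, …, n}`, the `t`-th element (in increasing order) of
`{0, …, n} \ {i, j}`. -/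
def omitTwo {n : ℕ} (i j : Fin (n + 1)) (t : Fin (n - 1)) : Fin (n + 1) :=
  if (t : ℕ) < (i : ℕ) then ⟨t, by omega⟩
  else if (t : ℕ) + 1 < (j : ℕ) then ⟨(t : ℕ) + 1, by have := t.isLt; omega⟩
  else ⟨(t : ℕ) + 2, by have := t.isLt; omega⟩

/-- `Δ_{ij}`: the determinant over `𝔽₂` of the `n × n` matrix whose first `n - 1` columns are
`w₁, …, w_{n+1}` with `w_i`, `w_j` omitted (in increasing order of index) and whose last
column is the coordinatewise product of `w_i` and `w_j`. -/
def DeltaIJ (n : ℕ) (w : Fin (n + 1) → Fin n → ZMod 2) (i j : Fin (n + 1)) : ZMod 2 :=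
  Matrix.det (Matrix.of fun r c : Fin n =>
    if h : (c : ℕ) < n - 1 then w (omitTwo i j ⟨c, h⟩) r else w i r * w j r)

/-- `D(w₁, …, w_{n+1}) = ∑_{i < j} Δ_{ij}`. -/
def D₂ (n : ℕ) (w : Fin (n + 1) → Fin n → ZMod 2) : ZMod 2 :=
  ∑ p ∈ Finset.univ.filter (fun p : Fin (n + 1) × Fin (n + 1) => p.1 < p.2),
    DeltaIJ n w p.1 p.2

/-- The Parshin symbol `[c₁ z^{k₁}, …, c_{n+1} z^{k_{n+1}}]` of `n + 1` monomials in `n`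
variables: `(-1)^{D(k̄₁, …, k̄_{n+1})} ∏ᵢ cᵢ^{(-1)ⁱ det(k₁, …, k̂ᵢ, …, k_{n+1})}`, where `k̄`
denotes mod-2 reduction (indices `i` are 1-based, so the 0-based index `i : Fin (n+1)`
contributes the sign `(-1)^{i+1}`). -/
noncomputable def parshinSymbol (n : ℕ) (c : Fin (n + 1) → ℂ)
    (k : Fin (n + 1) → Fin n → ℤ) : ℂ :=
  (if D₂ n (fun t r => ((k t r : ℤ) : ZMod 2)) = 0 then (1 : ℂ) else -1) *
    ∏ i : Fin (n + 1),
      c i ^ ((-1 : ℤ) ^ ((i : ℕ) + 1) *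
        Matrix.det (Matrix.of fun r c' : Fin n => k (i.succAbove c') r))
lemma omitTwo_injective {n : ℕ} {i j : Fin (n + 1)} (h : i < j) :
    Function.Injective (omitTwo i j) := by
  intro t1 t2 heq
  have hj := j.isLt
  rw [Fin.lt_def] at h
  unfold omitTwo at heq
  split_ifs at heq <;> rw [Fin.ext_iff] at heq ⊢ <;> simp at heq ⊢ <;> omega

lemma omitTwo_range {n : ℕ} {i j : Fin (n + 1)} (h : i < j) (s : Fin (n + 1)) :
    (∃ t, omitTwo i j t = s) ↔ s ≠ i ∧ s ≠ j := by
  have hj := j.isLt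
  rw [Fin.lt_def] at h
  constructor
  · rintro ⟨t, rfl⟩
    have ht := t.isLt
    unfold omitTwo
    split_ifs <;> constructor <;> rw [Fin.ne_iff_vne] <;> simp <;> omega
  · rintro ⟨h1, h2⟩
    rw [Fin.ne_iff_vne] at h1 h2
    have hs := s.isLt
    rcases lt_trichotomy (s : ℕ) (i : ℕ) with hc | hc | hc
    · exact ⟨⟨s, by omega⟩, by simp [omitTwo, hc, Fin.ext_iff]⟩
    · omega
    · rcases lt_trichotomy (s : ℕ) (j : ℕ) with hd | hd | hd
      · refine ⟨⟨(s : ℕ) - 1, by omega⟩, ?_⟩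
        have e1 : ¬ ((s:ℕ) - 1 < (i:ℕ)) := by omega
        have e2 : (s:ℕ) - 1 + 1 < (j:ℕ) := by omega
        simp [omitTwo, e1, e2, Fin.ext_iff]; omega
      · omega
      · refine ⟨⟨(s : ℕ) - 2, by omega⟩, ?_⟩
        have e1 : ¬ ((s:ℕ) - 2 < (i:ℕ)) := by omega
        have e2 : ¬ ((s:ℕ) - 2 + 1 < (j:ℕ)) := by omega
        simp [omitTwo, e1, e2, Fin.ext_iff]; omega

lemma exists_perm_comp {α β : Type*} {f g : α → β} (hf : Function.Injective f)
    (hg : Function.Injective g) (h : Set.range f = Set.range g) :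
    ∃ e : Equiv.Perm α, ∀ x, f x = g (e x) := by
  refine ⟨(Equiv.ofInjective f hf).trans ((Equiv.setCongr h).trans
    (Equiv.ofInjective g hg).symm), fun x => ?_⟩
  simp [Equiv.apply_ofInjective_symm hg]

lemma DeltaIJ_perm {n : ℕ} (hn : 1 ≤ n) (w : Fin (n + 1) → Fin n → ZMod 2)
    (σ : Equiv.Perm (Fin (n + 1))) {i j a b : Fin (n + 1)} (hij : i < j) (hab : a < b)
    (hia : (σ i = a ∧ σ j = b) ∨ (σ i = b ∧ σ j = a)) :
    DeltaIJ n (fun t => w (σ t)) i j = DeltaIJ n w a b := by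
  set g1 : Fin n → Option (Fin (n + 1)) :=
    fun c => if h : (c : ℕ) < n - 1 then some (σ (omitTwo i j ⟨c, h⟩)) else none with hg1def
  set g2 : Fin n → Option (Fin (n + 1)) :=
    fun c => if h : (c : ℕ) < n - 1 then some (omitTwo a b ⟨c, h⟩) else none with hg2def
  have hlast : ∀ c : Fin n, ¬ ((c : ℕ) < n - 1) → (c : ℕ) = n - 1 := by
    intro c hc; have := c.isLt; omega
  have hg1 : Function.Injective g1 := by
    intro c1 c2 hcc
    simp only [hg1def] at hcc
    split_ifs at hcc with h1 h2 h2
    · have := omitTwo_injective hij (σ.injective (Option.some_injective _ hcc))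
      rw [Fin.ext_iff] at this ⊢; exact this
    · exact Fin.ext ((hlast c1 h1).trans (hlast c2 h2).symm)
  have hg2 : Function.Injective g2 := by
    intro c1 c2 hcc
    simp only [hg2def] at hcc
    split_ifs at hcc with h1 h2 h2
    · have := omitTwo_injective hab (Option.some_injective _ hcc)
      rw [Fin.ext_iff] at this ⊢; exact this
    · exact Fin.ext ((hlast c1 h1).trans (hlast c2 h2).symm)
  have hne : ∀ s : Fin (n + 1), (s ≠ σ i ∧ s ≠ σ j) ↔ (s ≠ a ∧ s ≠ b) := by
    intro s
    rcases hia with ⟨h1, h2⟩ | ⟨h1, h2⟩ <;> rw [h1, h2] <;> tauto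
  have hrange : Set.range g1 = Set.range g2 := by
    ext x
    cases x with
    | none =>
        simp only [Set.mem_range, hg1def, hg2def]
        constructor <;> rintro ⟨c, hc⟩ <;>
          exact ⟨⟨n - 1, by omega⟩, by simp⟩
    | some s =>
        simp only [Set.mem_range, hg1def, hg2def]
        constructor
        · rintro ⟨c, hc⟩
          split_ifs at hc with h
          have hc' := Option.some_injective _ hc
          have : σ.symm s ≠ i ∧ σ.symm s ≠ j := by
            rw [← omitTwo_range hij]
            exact ⟨⟨c, h⟩, by simp [← hc']⟩
          have hsab : s ≠ a ∧ s ≠ b := by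
            rw [← hne]
            constructor <;> intro hh <;> apply_fun σ.symm at hh <;> simp at hh <;> tauto
          obtain ⟨t, ht⟩ := (omitTwo_range hab s).2 hsab
          exact ⟨⟨t, by have := t.isLt; omega⟩, by simp [t.isLt]; convert ht⟩
        · rintro ⟨c, hc⟩
          split_ifs at hc with h
          have hc' := Option.some_injective _ hc
          have hsab : s ≠ a ∧ s ≠ b := by
            rw [← omitTwo_range hab]; exact ⟨_, hc'⟩
          have : σ.symm s ≠ i ∧ σ.symm s ≠ j := by
            have := (hne s).2 hsab
            constructor <;> intro hh <;> rw [← hh] at this <;> simp at this <;> tauto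
          obtain ⟨t, ht⟩ := (omitTwo_range hij _).2 this
          refine ⟨⟨t, by have := t.isLt; omega⟩, ?_⟩
          simp [t.isLt]
          rw [ht]
          simp
  obtain ⟨e, he⟩ := exists_perm_comp hg1 hg2 hrange
  have hM : (Matrix.of fun r c : Fin n =>
      if h : (c : ℕ) < n - 1 then w (σ (omitTwo i j ⟨c, h⟩)) r else w (σ i) r * w (σ j) r) =
      (Matrix.of fun r c : Fin n =>
      if h : (c : ℕ) < n - 1 then w (omitTwo a b ⟨c, h⟩) r else w a r * w b r).submatrix id e := by
    ext r c
    have hec := he c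
    simp only [hg1def, hg2def] at hec
    simp only [Matrix.submatrix_apply, Matrix.of_apply, id]
    by_cases h : (c : ℕ) < n - 1
    · rw [dif_pos h] at hec ⊢
      by_cases h' : ((e c : Fin n) : ℕ) < n - 1
      · rw [dif_pos h'] at hec ⊢
        rw [σ.injective.eq_iff.mpr rfl] at hec
        rw [Option.some_injective _ hec]
      · rw [dif_neg h'] at hec; exact absurd hec (by simp)
    · rw [dif_neg h] at hec ⊢
      by_cases h' : ((e c : Fin n) : ℕ) < n - 1
      · rw [dif_pos h'] at hec; exact absurd hec.symm (by simp)
      · rw [dif_neg h'] at hec ⊢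
        rcases hia with ⟨h1, h2⟩ | ⟨h1, h2⟩ <;> rw [h1, h2] <;>
          first | rfl | exact mul_comm _ _
  unfold DeltaIJ
  rw [hM, Matrix.det_permute']
  rcases Int.units_eq_one_or (Equiv.Perm.sign e) with h | h <;> rw [h] <;> simp <;>
    rw [CharTwo.neg_eq]


noncomputable def dtt (n : ℕ) (k : Fin (n + 1) → Fin n → ℤ) (i : Fin (n + 1)) : ℤ :=
  Matrix.det (Matrix.of fun r c' : Fin n => k (i.succAbove c') r)

lemma det_N {n : ℕ} (k : Fin (n + 1) → Fin n → ℤ) (x : Fin (n + 1) → ℤ) :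
    (Matrix.of fun a b : Fin (n + 1) => Fin.cases (x a) (k a) b).det
      = ∑ i : Fin (n + 1), (-1 : ℤ) ^ (i : ℕ) * x i * dtt n k i := by
  rw [Matrix.det_succ_column_zero]
  refine Finset.sum_congr rfl fun i _ => ?_
  have e0 : (Matrix.of fun a b : Fin (n+1) => (Fin.cases (x a) (k a) b : ℤ)) i 0 = x i := rfl
  rw [e0]
  congr 1
  rw [dtt, ← Matrix.det_transpose]
  congr 1

lemma star_identity {n : ℕ} (k : Fin (n + 1) → Fin n → ℤ) (σ : Equiv.Perm (Fin (n + 1)))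
    (i : Fin (n + 1)) :
    (-1 : ℤ) ^ (i : ℕ) * dtt n (fun t => k (σ t)) i
      = (Equiv.Perm.sign σ : ℤ) * ((-1 : ℤ) ^ ((σ i : ℕ)) * dtt n k (σ i)) := by
  set x : Fin (n + 1) → ℤ := Pi.single (σ i) 1 with hx
  have h1 : ∑ t : Fin (n + 1), (-1 : ℤ) ^ (t : ℕ) * x (σ t) * dtt n (fun t => k (σ t)) t
      = (-1 : ℤ) ^ (i : ℕ) * dtt n (fun t => k (σ t)) i := by
    rw [Finset.sum_eq_single i]
    · simp [hx]
    · intro t _ ht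
      have : x (σ t) = 0 := by
        rw [hx]; exact Pi.single_eq_of_ne (fun hh => ht (σ.injective hh)) 1
      rw [this]; ring
    · simp
  have h2 : ∑ j : Fin (n + 1), (-1 : ℤ) ^ (j : ℕ) * x j * dtt n k j
      = (-1 : ℤ) ^ ((σ i : ℕ)) * dtt n k (σ i) := by
    rw [Finset.sum_eq_single (σ i)]
    · simp [hx]
    · intro t _ ht
      rw [hx, Pi.single_eq_of_ne ht 1]; ring
    · simp
  have h3 := det_N (fun t => k (σ t)) (fun t => x (σ t))
  have h4 : (Matrix.of fun a b : Fin (n + 1) => (Fin.cases (x (σ a)) (k (σ a)) b : ℤ))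
      = (Matrix.of fun a b : Fin (n + 1) => (Fin.cases (x a) (k a) b : ℤ)).submatrix σ id := by
    refine Matrix.ext fun a b => ?_
    simp [Matrix.submatrix]
  rw [h4, Matrix.det_permute, det_N, h2] at h3
  rw [← h1, ← h3]
  norm_cast
lemma D₂_perm {n : ℕ} (hn : 1 ≤ n) (w : Fin (n + 1) → Fin n → ZMod 2)
    (σ : Equiv.Perm (Fin (n + 1))) : D₂ n (fun t => w (σ t)) = D₂ n w := by
  unfold D₂
  refine Finset.sum_nbij'
    (fun p => if σ p.1 < σ p.2 then (σ p.1, σ p.2) else (σ p.2, σ p.1))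
    (fun q => if σ.symm q.1 < σ.symm q.2 then (σ.symm q.1, σ.symm q.2)
      else (σ.symm q.2, σ.symm q.1)) ?_ ?_ ?_ ?_ ?_
  · intro p hp
    simp only [Finset.mem_filter, Finset.mem_univ, true_and] at hp ⊢
    have hne : σ p.1 ≠ σ p.2 := σ.injective.ne (ne_of_lt hp)
    split_ifs with h
    · exact h
    · exact lt_of_le_of_ne (le_of_not_gt h) hne.symm
  · intro q hq
    simp only [Finset.mem_filter, Finset.mem_univ, true_and] at hq ⊢
    have hne : σ.symm q.1 ≠ σ.symm q.2 := σ.symm.injective.ne (ne_of_lt hq)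
    split_ifs with h
    · exact h
    · exact lt_of_le_of_ne (le_of_not_gt h) hne.symm
  · intro p hp
    simp only [Finset.mem_filter, Finset.mem_univ, true_and] at hp
    split_ifs with h1 <;> simp_all [asymm hp]
  · intro q hq
    simp only [Finset.mem_filter, Finset.mem_univ, true_and] at hq
    split_ifs with h1 <;> simp_all [asymm hq]
  · intro p hp
    simp only [Finset.mem_filter, Finset.mem_univ, true_and] at hp
    split_ifs with h
    · exact DeltaIJ_perm hn w σ hp h (Or.inl ⟨rfl, rfl⟩)
    · have hne : σ p.1 ≠ σ p.2 := σ.injective.ne (ne_of_lt hp)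
      exact DeltaIJ_perm hn w σ hp (lt_of_le_of_ne (le_of_not_gt h) hne.symm)
        (Or.inr ⟨rfl, rfl⟩)

lemma parshinSymbol_eq (n : ℕ) (c : Fin (n + 1) → ℂ) (k : Fin (n + 1) → Fin n → ℤ) :
    parshinSymbol n c k =
      (if D₂ n (fun t r => ((k t r : ℤ) : ZMod 2)) = 0 then (1 : ℂ) else -1) *
        ∏ i : Fin (n + 1), c i ^ ((-1 : ℤ) ^ ((i : ℕ) + 1) * dtt n k i) := rfl

/-- The Parshin symbol of monomials is skew-symmetric: permuting the
monomials raises the symbol to the power `sgn σ`. -/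
theorem stmt11 (n : ℕ) (hn : 1 ≤ n) (c : Fin (n + 1) → ℂ) (hc : ∀ i, c i ≠ 0)
    (k : Fin (n + 1) → Fin n → ℤ) (σ : Equiv.Perm (Fin (n + 1))) :
    parshinSymbol n (fun t => c (σ t)) (fun t => k (σ t)) =
      parshinSymbol n c k ^ ((Equiv.Perm.sign σ : ℤ)) := by
  have hD : D₂ n (fun t r => ((k (σ t) r : ℤ) : ZMod 2))
      = D₂ n (fun t r => ((k t r : ℤ) : ZMod 2)) :=
    D₂_perm hn (fun t r => ((k t r : ℤ) : ZMod 2)) σ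
  rw [parshinSymbol_eq, parshinSymbol_eq, hD, mul_zpow]
  congr 1
  · rcases Int.units_eq_one_or (Equiv.Perm.sign σ) with h | h <;> rw [h] <;>
      split_ifs <;> norm_num
  · have hexp : ∀ i : Fin (n + 1), (-1 : ℤ) ^ ((i : ℕ) + 1) * dtt n (fun t => k (σ t)) i
        = ((Equiv.Perm.sign σ : ℤ)) * ((-1 : ℤ) ^ (((σ i) : ℕ) + 1) * dtt n k (σ i)) := by
      intro i
      have h := star_identity k σ i
      rw [pow_succ, pow_succ]
      linear_combination (-1 : ℤ) * h
    calc ∏ i : Fin (n + 1), c (σ i) ^ ((-1 : ℤ) ^ ((i : ℕ) + 1) * dtt n (fun t => k (σ t)) i)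
        = ∏ i : Fin (n + 1), (c (σ i) ^ ((-1 : ℤ) ^ (((σ i) : ℕ) + 1) * dtt n k (σ i)))
            ^ ((Equiv.Perm.sign σ : ℤ)) := by
          refine Finset.prod_congr rfl fun i _ => ?_
          rw [hexp i, mul_comm ((Equiv.Perm.sign σ : ℤ)) _, zpow_mul]
      _ = (∏ i : Fin (n + 1), c (σ i) ^ ((-1 : ℤ) ^ (((σ i) : ℕ) + 1) * dtt n k (σ i)))
            ^ ((Equiv.Perm.sign σ : ℤ)) := Finset.prod_zpow _ _ _
      _ = (∏ j : Fin (n + 1), c j ^ ((-1 : ℤ) ^ ((j : ℕ) + 1) * dtt n k j))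
            ^ ((Equiv.Perm.sign σ : ℤ)) := by
          congr 1
          exact Equiv.prod_comp σ (fun j => c j ^ ((-1 : ℤ) ^ ((j : ℕ) + 1) * dtt n k j))
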